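/- arXiv:1805.10131 — 2 statements merged into one kernel-verified Lean document; each statement's English description precedes it below -/
import Mathlib

section
/- If A is a bijective bounded right linear operator between right quaternionic Hilbert spaces and K is compact, then A + K is a Fredholm operator. -/
/-!
Over `ℝ`, `A + K = A (1 + C)` with `C = A⁻¹ K` compact, so it suffices to do Riesz theory for
`1 + C` on the real Hilbert space `V`. On `ker (1 + C)` and on `(range (1 + C))ᗮ` one has
`‖w‖ ≤ ‖C w‖`, so `C` restricted there is a compact embedding and both spaces are
finite-dimensional. The range is closed because `1 + C` is bounded below on `(ker (1 + C))ᗮ`: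
a normalized sequence there with `(1 + C) u → 0` has a subsequence along which `C u`, hence `u`,
converges, to a unit vector of `ker (1 + C) ∩ (ker (1 + C))ᗮ = 0`. Finiteness over `ℝ` then
gives finiteness over `ℍᵐᵒᵖ`.
-/

open RealInnerProductSpace Filter Topology Metric LinearMap

local notation "ℍ" => Quaternion ℝ

theorem FiniteDimensional.of_isCompactOperator_of_isUniformInducing (𝕜 : Type*)
    [NontriviallyNormedField 𝕜] [CompleteSpace 𝕜] {E F : Type*} [AddCommGroup E] [Module 𝕜 E]
    [UniformSpace E] [IsUniformAddGroup E] [T2Space E] [ContinuousSMul 𝕜 E] [UniformSpace F]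
    {f : E → F} (hf : IsCompactOperator f) (hfu : IsUniformInducing f) :
    FiniteDimensional 𝕜 E := by
  obtain ⟨U, hU, K, hK, hUK⟩ := (isCompactOperator_iff_exists_mem_nhds_image_subset_compact f).1 hf
  exact .of_totallyBounded_nhds_zero 𝕜 hU <|
    (totallyBounded_image_iff hfu).1 (hK.totallyBounded.subset hUK)

theorem Submodule.finiteDimensional_of_forall_norm_le_norm_apply {𝕜 E F : Type*}
    [NontriviallyNormedField 𝕜] [CompleteSpace 𝕜] [NormedAddCommGroup E] [NormedSpace 𝕜 E]
    [NormedAddCommGroup F] [NormedSpace 𝕜 F] {C : E →L[𝕜] F} (hC : IsCompactOperator C)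
    (W : Submodule 𝕜 E) (hW : ∀ w ∈ W, ‖w‖ ≤ ‖C w‖) : FiniteDimensional 𝕜 W := by
  have hanti : AntilipschitzWith 1 (C ∘L W.subtypeL) :=
    (C ∘L W.subtypeL).antilipschitz_of_bound fun w ↦ by simpa using hW w w.2
  exact .of_isCompactOperator_of_isUniformInducing 𝕜 (hC.comp_clm W.subtypeL)
    (hanti.isUniformInducing (C ∘L W.subtypeL).uniformContinuous)

theorem LinearMap.range_comp_subtype_of_isCompl {R M M₂ : Type*} [Ring R] [AddCommGroup M]
    [Module R M] [AddCommGroup M₂] [Module R M₂] (f : M →ₗ[R] M₂) {q : Submodule R M}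
    (hq : IsCompl q (ker f)) : range (f ∘ₗ q.subtype) = range f := by
  refine le_antisymm (range_comp_le_range _ _) ?_
  rintro _ ⟨x, rfl⟩
  obtain ⟨y, z, hy, hz, rfl⟩ := Submodule.codisjoint_iff_exists_add_eq.1 hq.codisjoint x
  exact ⟨⟨y, hy⟩, by simp [mem_ker.1 hz]⟩

theorem exists_seq_norm_eq_one_tendsto_zero_of_not_antilipschitz {E F : Type*}
    [NormedAddCommGroup E] [NormedSpace ℝ E] [NormedAddCommGroup F] [NormedSpace ℝ F]
    (f : E →L[ℝ] F) (hf : ¬ ∃ K, AntilipschitzWith K f) :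
    ∃ u : ℕ → E, (∀ n, ‖u n‖ = 1) ∧ Tendsto (f ∘ u) atTop (𝓝 0) := by
  rw [antilipschitzWith_iff_exists_mul_le_norm] at hf
  push Not at hf
  choose x hx using fun n : ℕ ↦ hf (1 / (n + 1)) (by positivity)
  have hx0 (n : ℕ) : x n ≠ 0 := by
    rintro h
    simpa [h] using hx n
  refine ⟨fun n ↦ ‖x n‖⁻¹ • x n, fun n ↦ norm_smul_inv_norm (hx0 n), ?_⟩
  refine squeeze_zero_norm (fun n ↦ ?_) tendsto_one_div_add_atTop_nhds_zero_nat
  have hpos : 0 < ‖x n‖ := norm_pos_iff.2 (hx0 n)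
  calc ‖f (‖x n‖⁻¹ • x n)‖ = ‖f (x n)‖ / ‖x n‖ := by
        rw [map_smul, norm_smul, norm_inv, norm_norm, inv_mul_eq_div]
    _ ≤ 1 / (n + 1) := by
        rw [div_le_iff₀ hpos]
        exact (hx n).le

section RieszTheory

variable {E : Type*} [NormedAddCommGroup E] [NormedSpace ℝ E] {C : E →L[ℝ] E}

theorem IsCompactOperator.finiteDimensional_ker_one_add (hC : IsCompactOperator C) :
    FiniteDimensional ℝ (LinearMap.ker ((1 + C : E →L[ℝ] E) : E →ₗ[ℝ] E)) :=
  (LinearMap.ker _).finiteDimensional_of_forall_norm_le_norm_apply hC fun w hw ↦ by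
    have hCw : w + C w = 0 := hw
    rw [eq_neg_of_add_eq_zero_right hCw, norm_neg]

theorem IsCompactOperator.exists_antilipschitzWith_one_add_comp_subtypeL
    (hC : IsCompactOperator C) {N : Submodule ℝ E} (hN : IsClosed (N : Set E))
    (hNker : Disjoint N (LinearMap.ker ((1 + C : E →L[ℝ] E) : E →ₗ[ℝ] E))) :
    ∃ K, AntilipschitzWith K ((1 + C) ∘L N.subtypeL) := by
  by_contra hanti
  obtain ⟨u, hu1, hu0⟩ := exists_seq_norm_eq_one_tendsto_zero_of_not_antilipschitz _ hanti
  obtain ⟨M, hM, hCM⟩ := hC.image_closedBall_subset_compact 1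
  obtain ⟨y, -, φ, hφ, hy⟩ :=
    hM.tendsto_subseq fun n ↦ hCM ⟨u n, mem_closedBall_zero_iff.2 (hu1 n).le, rfl⟩
  have hu0φ : Tendsto (fun n ↦ (1 + C) (u (φ n) : E)) atTop (𝓝 0) := hu0.comp hφ.tendsto_atTop
  -- `u = (1 + C) u - C u`, and both terms converge along `φ`
  have hlim : Tendsto (fun n ↦ (u (φ n) : E)) atTop (𝓝 (-y)) := by
    simpa using hu0φ.sub hy
  have hyN : -y ∈ N := hN.mem_of_tendsto hlim (.of_forall fun n ↦ (u (φ n)).2)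
  have hyker : -y ∈ LinearMap.ker ((1 + C : E →L[ℝ] E) : E →ₗ[ℝ] E) :=
    tendsto_nhds_unique (((1 + C).continuous.tendsto _).comp hlim) hu0φ
  have hy1 : ‖-y‖ = 1 :=
    tendsto_nhds_unique hlim.norm (tendsto_const_nhds.congr fun n ↦ (hu1 (φ n)).symm)
  simp [Submodule.disjoint_def.1 hNker _ hyN hyker] at hy1

end RieszTheory

section Hilbert

variable {V : Type*} [NormedAddCommGroup V] [InnerProductSpace ℝ V] {C : V →L[ℝ] V}

theorem norm_le_norm_apply_of_mem_orthogonal_range_one_add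
    {w : V} (hw : w ∈ (LinearMap.range ((1 + C : V →L[ℝ] V) : V →ₗ[ℝ] V))ᗮ) :
    ‖w‖ ≤ ‖C w‖ := by
  have hinner : ⟪w, w⟫ = -⟪C w, w⟫ := by
    have h0 : ⟪w + C w, w⟫ = 0 := (Submodule.mem_orthogonal _ w).1 hw _ ⟨w, rfl⟩
    rw [inner_add_left] at h0
    linarith
  rcases (norm_nonneg w).eq_or_lt with hw0 | hw0
  · rw [← hw0]; exact norm_nonneg _
  refine le_of_mul_le_mul_right ?_ hw0
  calc ‖w‖ * ‖w‖ = -⟪C w, w⟫ := by rw [← hinner, real_inner_self_eq_norm_mul_norm]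
    _ ≤ ‖C w‖ * ‖w‖ := (neg_le_abs _).trans (abs_real_inner_le_norm _ _)

variable [CompleteSpace V]

theorem IsCompactOperator.isClosed_range_one_add (hC : IsCompactOperator C) :
    IsClosed (LinearMap.range ((1 + C : V →L[ℝ] V) : V →ₗ[ℝ] V) : Set V) := by
  set S : V →L[ℝ] V := 1 + C
  set N := (LinearMap.ker (S : V →ₗ[ℝ] V))ᗮ
  have : CompleteSpace N := (Submodule.isClosed_orthogonal _).completeSpace_coe
  obtain ⟨K, hK⟩ := hC.exists_antilipschitzWith_one_add_comp_subtypeL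
    (Submodule.isClosed_orthogonal _) (Submodule.orthogonal_disjoint _).symm
  rw [← (S : V →ₗ[ℝ] V).range_comp_subtype_of_isCompl (Submodule.isCompl_orthogonal _).symm]
  exact hK.isClosed_range (S ∘L N.subtypeL).uniformContinuous

theorem IsCompactOperator.finiteDimensional_quotient_range_one_add (hC : IsCompactOperator C) :
    FiniteDimensional ℝ (V ⧸ LinearMap.range ((1 + C : V →L[ℝ] V) : V →ₗ[ℝ] V)) := by
  set R := LinearMap.range ((1 + C : V →L[ℝ] V) : V →ₗ[ℝ] V)
  have := Rᗮ.finiteDimensional_of_forall_norm_le_norm_apply hC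
    fun _ hw ↦ norm_le_norm_apply_of_mem_orthogonal_range_one_add hw
  have : CompleteSpace R := hC.isClosed_range_one_add.completeSpace_coe
  exact (Submodule.quotientEquivOfIsCompl R Rᗮ (Submodule.isCompl_orthogonal R)).symm.finiteDimensional

end Hilbert

namespace ContinuousLinearEquiv

variable {V U : Type*} [NormedAddCommGroup V] [NormedAddCommGroup U] [NormedSpace ℝ U]

theorem coe_add_eq_comp_one_add [NormedSpace ℝ V] (e : V ≃L[ℝ] U) (K : V →L[ℝ] U) :
    (e : V →L[ℝ] U) + K = (e : V →L[ℝ] U) ∘L (1 + (e.symm : U →L[ℝ] V) ∘L K) := by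
  ext x
  simp

theorem finiteDimensional_ker_add [NormedSpace ℝ V] (e : V ≃L[ℝ] U) {K : V →L[ℝ] U}
    (hK : IsCompactOperator K) :
    FiniteDimensional ℝ (LinearMap.ker (((e : V →L[ℝ] U) + K : V →L[ℝ] U) : V →ₗ[ℝ] U)) := by
  have hC : IsCompactOperator ((e.symm : U →L[ℝ] V) ∘L K) := hK.clm_comp (e.symm : U →L[ℝ] V)
  rw [e.coe_add_eq_comp_one_add K, ContinuousLinearMap.toLinearMap_comp,
    toLinearMap_toContinuousLinearMap, LinearEquiv.ker_comp]
  exact hC.finiteDimensional_ker_one_add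

theorem finiteDimensional_quotient_range_add [InnerProductSpace ℝ V] [CompleteSpace V]
    (e : V ≃L[ℝ] U) {K : V →L[ℝ] U} (hK : IsCompactOperator K) :
    FiniteDimensional ℝ (U ⧸ LinearMap.range (((e : V →L[ℝ] U) + K : V →L[ℝ] U) : V →ₗ[ℝ] U)) := by
  have hC : IsCompactOperator ((e.symm : U →L[ℝ] V) ∘L K) := hK.clm_comp (e.symm : U →L[ℝ] V)
  have := hC.finiteDimensional_quotient_range_one_add
  rw [e.coe_add_eq_comp_one_add K, ContinuousLinearMap.toLinearMap_comp, LinearMap.range_comp]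
  exact (Submodule.Quotient.equiv _ _ e.toLinearEquiv rfl).finiteDimensional

end ContinuousLinearEquiv

/-- If `A` is a bijective bounded right linear operator between right quaternionic Hilbert
spaces and `K` is compact, then `A + K` is Fredholm. -/
theorem bijective_add_compact_fredholm
    {V U : Type*}
    [NormedAddCommGroup V] [InnerProductSpace ℝ V] [CompleteSpace V]
    [Module ℍᵐᵒᵖ V] [IsScalarTower ℝ ℍᵐᵒᵖ V]
    [NormedAddCommGroup U] [InnerProductSpace ℝ U] [CompleteSpace U]
    [Module ℍᵐᵒᵖ U] [IsScalarTower ℝ ℍᵐᵒᵖ U]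
    (A K : V →L[ℍᵐᵒᵖ] U) (hA : Function.Bijective A) (hK : IsCompactOperator ⇑K) :
    FiniteDimensional ℍᵐᵒᵖ (LinearMap.ker ((A + K : V →L[ℍᵐᵒᵖ] U) : V →ₗ[ℍᵐᵒᵖ] U)) ∧
      FiniteDimensional ℍᵐᵒᵖ (U ⧸ LinearMap.range ((A + K : V →L[ℍᵐᵒᵖ] U) : V →ₗ[ℍᵐᵒᵖ] U)) := by
  set e := ContinuousLinearEquiv.ofBijective (A.restrictScalars ℝ)
    (LinearMap.ker_eq_bot.2 hA.1) (LinearMap.range_eq_top.2 hA.2)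
  have he : (e : V →L[ℝ] U) = A.restrictScalars ℝ := ContinuousLinearEquiv.coe_ofBijective ..
  have hK' : IsCompactOperator (K.restrictScalars ℝ) := hK
  have hker := e.finiteDimensional_ker_add hK'
  have hcoker := e.finiteDimensional_quotient_range_add hK'
  rw [he] at hker hcoker
  -- over `ℝ`, the kernel and cokernel of `A + K` are definitionally those over `ℍᵐᵒᵖ`
  have : Module.Finite ℝ (LinearMap.ker ((A + K : V →L[ℍᵐᵒᵖ] U) : V →ₗ[ℍᵐᵒᵖ] U)) := hker
  have : Module.Finite ℝ (U ⧸ LinearMap.range ((A + K : V →L[ℍᵐᵒᵖ] U) : V →ₗ[ℍᵐᵒᵖ] U)) := hcoker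
  exact ⟨.of_restrictScalars_finite ℝ _ _, .of_restrictScalars_finite ℝ _ _⟩
end

section
/- If F is a finite-rank bounded right linear operator on a right quaternionic Hilbert space, then I + F is Fredholm with index zero. -/
/-! Put `W = range F` and `T = 1 + F`. Then `T x ∈ W ↔ x ∈ W` and `W + range T = V`, so
`ker T ⊆ W` and `V / range T ≅ W / T(W)`: `T` has the kernel and cokernel of its restriction to the
finite-dimensional space `W`, whose index is `dim W - dim W = 0`. -/

noncomputable section

open MulOpposite RealInnerProductSpace Filter Topology

local notation "ℍ" => Quaternion ℝ

/-- `ind A = dim ker A - dim coker A`; as `finrank` is `0` on infinite-dimensional spaces, this is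
the index only when `A` is Fredholm. -/
def qind {V U : Type*} [NormedAddCommGroup V] [Module ℍᵐᵒᵖ V]
    [NormedAddCommGroup U] [Module ℍᵐᵒᵖ U] (A : V →L[ℍᵐᵒᵖ] U) : ℤ :=
  (Module.finrank ℍᵐᵒᵖ (LinearMap.ker (A : V →ₗ[ℍᵐᵒᵖ] U)) : ℤ) -
    (Module.finrank ℍᵐᵒᵖ (U ⧸ LinearMap.range (A : V →ₗ[ℍᵐᵒᵖ] U)) : ℤ)

namespace LinearMap

open Submodule

section Restrict

variable {R V : Type*} [Ring R] [AddCommGroup V] [Module R V] {T : V →ₗ[R] V} {W : Submodule R V}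

theorem ker_eq_map_ker_restrict (hT : ∀ x ∈ W, T x ∈ W) (hW : ∀ x, T x ∈ W → x ∈ W) :
    ker T = (ker (T.restrict hT)).map W.subtype := by
  have hker : ker T ≤ W := fun x hx ↦ hW x ((mem_ker.mp hx).symm ▸ W.zero_mem)
  rw [ker_restrict, map_comap_subtype, inf_eq_right.mpr hker]

theorem range_restrict_eq_comap_range (hT : ∀ x ∈ W, T x ∈ W) (hW : ∀ x, T x ∈ W → x ∈ W) :
    range (T.restrict hT) = (range T).comap W.subtype := by
  rw [range_restrict]
  ext ⟨w, hw⟩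
  simp only [Submodule.mem_comap, Submodule.coe_subtype, Submodule.mem_map, mem_range]
  constructor
  · rintro ⟨x, -, hx⟩
    exact ⟨x, hx⟩
  · rintro ⟨x, hx⟩
    exact ⟨x, hW x (hx ▸ hw), hx⟩

def quotientRangeRestrictEquiv (hT : ∀ x ∈ W, T x ∈ W) (hW : ∀ x, T x ∈ W → x ∈ W)
    (hWT : W ⊔ range T = ⊤) : (W ⧸ range (T.restrict hT)) ≃ₗ[R] V ⧸ range T :=
  have hsurj : Function.Surjective ((range T).mkQ ∘ₗ W.subtype) := by
    intro q
    obtain ⟨v, rfl⟩ := (range T).mkQ_surjective q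
    obtain ⟨w, hw, y, ⟨x, rfl⟩, rfl⟩ := mem_sup.mp (hWT ▸ mem_top : v ∈ W ⊔ range T)
    exact ⟨⟨w, hw⟩, (Submodule.Quotient.eq _).mpr ⟨-x, by simp⟩⟩
  have hker : range (T.restrict hT) = ker ((range T).mkQ ∘ₗ W.subtype) := by
    rw [ker_comp, ker_mkQ, range_restrict_eq_comap_range hT hW]
  (quotEquivOfEq _ _ hker).trans (((range T).mkQ ∘ₗ W.subtype).quotKerEquivOfSurjective hsurj)

theorem index_restrict_eq_index (hT : ∀ x ∈ W, T x ∈ W) (hW : ∀ x, T x ∈ W → x ∈ W)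
    (hWT : W ⊔ range T = ⊤) : (T.restrict hT).index = T.index := by
  rw [index_eq_finrank_sub, index_eq_finrank_sub, ker_eq_map_ker_restrict hT hW,
    finrank_map_subtype_eq, (quotientRangeRestrictEquiv hT hW hWT).finrank_eq]

end Restrict

section IdAdd

variable {R V : Type*} [Ring R] [AddCommGroup V] [Module R V] (F : V →ₗ[R] V)

theorem add_apply_mem_range (x : V) (hx : x ∈ range F) : x + F x ∈ range F :=
  add_mem hx (mem_range_self F x)

theorem mem_range_of_add_apply_mem_range (x : V) (hx : x + F x ∈ range F) : x ∈ range F := by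
  simpa using sub_mem hx (mem_range_self F x)

theorem range_sup_range_id_add : range F ⊔ range (LinearMap.id + F) = ⊤ := by
  refine eq_top_iff'.mpr fun x ↦ mem_sup.mpr ⟨-F x, neg_mem (mem_range_self F x),
    x + F x, mem_range_self (LinearMap.id + F) x, ?_⟩
  simp

end IdAdd

section FiniteRank

variable {K V : Type*} [DivisionRing K] [AddCommGroup V] [Module K V] (F : V →ₗ[K] V)
  [FiniteDimensional K (range F)]

theorem finiteDimensional_ker_id_add : FiniteDimensional K (ker (LinearMap.id + F)) := by
  rw [ker_eq_map_ker_restrict (add_apply_mem_range F) (mem_range_of_add_apply_mem_range F)]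
  infer_instance

theorem finiteDimensional_quotient_range_id_add :
    FiniteDimensional K (V ⧸ range (LinearMap.id + F)) :=
  (quotientRangeRestrictEquiv (add_apply_mem_range F) (mem_range_of_add_apply_mem_range F)
    (range_sup_range_id_add F)).finiteDimensional

theorem index_id_add_eq_zero : (LinearMap.id + F).index = 0 := by
  rw [← index_restrict_eq_index (add_apply_mem_range F) (mem_range_of_add_apply_mem_range F)
    (range_sup_range_id_add F), index_eq_of_finiteDimensional, sub_self]

end FiniteRank

end LinearMap

theorem id_add_finiteRank_index_zero_general
    {V : Type*}
    [NormedAddCommGroup V]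
    [Module ℍᵐᵒᵖ V]
    (F : V →L[ℍᵐᵒᵖ] V) (hF : FiniteDimensional ℍᵐᵒᵖ (LinearMap.range (F : V →ₗ[ℍᵐᵒᵖ] V))) :
    (FiniteDimensional ℍᵐᵒᵖ (LinearMap.ker ((ContinuousLinearMap.id ℍᵐᵒᵖ V + F : V →L[ℍᵐᵒᵖ] V) : V →ₗ[ℍᵐᵒᵖ] V)) ∧
        FiniteDimensional ℍᵐᵒᵖ (V ⧸ LinearMap.range ((ContinuousLinearMap.id ℍᵐᵒᵖ V + F : V →L[ℍᵐᵒᵖ] V) : V →ₗ[ℍᵐᵒᵖ] V))) ∧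
      qind (ContinuousLinearMap.id ℍᵐᵒᵖ V + F) = 0 :=
  -- `qind A` unfolds to `LinearMap.index A`, and `↑(id + F)` to `LinearMap.id + ↑F`.
  ⟨⟨LinearMap.finiteDimensional_ker_id_add (F : V →ₗ[ℍᵐᵒᵖ] V),
    LinearMap.finiteDimensional_quotient_range_id_add (F : V →ₗ[ℍᵐᵒᵖ] V)⟩,
    LinearMap.index_id_add_eq_zero (F : V →ₗ[ℍᵐᵒᵖ] V)⟩

/-- If `F` is a finite-rank bounded right linear operator on a right quaternionic Hilbert
space, then `I + F` is Fredholm with index zero. -/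
theorem id_add_finiteRank_index_zero
    {V : Type*}
    [NormedAddCommGroup V] [InnerProductSpace ℝ V] [CompleteSpace V]
    [Module ℍᵐᵒᵖ V] [IsScalarTower ℝ ℍᵐᵒᵖ V]
    (F : V →L[ℍᵐᵒᵖ] V) (hF : FiniteDimensional ℍᵐᵒᵖ (LinearMap.range (F : V →ₗ[ℍᵐᵒᵖ] V))) :
    (FiniteDimensional ℍᵐᵒᵖ (LinearMap.ker ((ContinuousLinearMap.id ℍᵐᵒᵖ V + F : V →L[ℍᵐᵒᵖ] V) : V →ₗ[ℍᵐᵒᵖ] V)) ∧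
        FiniteDimensional ℍᵐᵒᵖ (V ⧸ LinearMap.range ((ContinuousLinearMap.id ℍᵐᵒᵖ V + F : V →L[ℍᵐᵒᵖ] V) : V →ₗ[ℍᵐᵒᵖ] V))) ∧
      qind (ContinuousLinearMap.id ℍᵐᵒᵖ V + F) = 0 :=
  id_add_finiteRank_index_zero_general F hF
end
end
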